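/- arXiv:1405.4046 — 6 statements merged into one kernel-verified Lean document; each statement's English description precedes it below -/
import Mathlib

section
/- If γ(x,t) is a solution of the central affine curve flow γ_t = (1/4)q_x·γ - (1/2)q·γ_x, where q(·,t) is the central affine curvature of γ(·,t) (i.e., γ_{xx} = q·γ and det(γ, γ_x) = 1), then q satisfies the KdV equation q_t = (1/4)(q_{xxx} - 6 q q_x). -/
/-- Determinant of the 2×2 matrix with columns `u`, `v`. -/
noncomputable def det2 (u v : Fin 2 → ℝ) : ℝ := u 0 * v 1 - u 1 * v 0

/-- Partial derivative in the first (space) variable. -/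
noncomputable def pdx {E : Type*} [NormedAddCommGroup E] [NormedSpace ℝ E]
    (f : ℝ → ℝ → E) : ℝ → ℝ → E := fun x t => deriv (fun y => f y t) x

/-- Partial derivative in the second (time) variable. -/
noncomputable def pdt {E : Type*} [NormedAddCommGroup E] [NormedSpace ℝ E]
    (f : ℝ → ℝ → E) : ℝ → ℝ → E := fun x t => deriv (fun s => f x s) t

section Aux

variable {E : Type*} [NormedAddCommGroup E] [NormedSpace ℝ E] {f : ℝ → ℝ → E}

lemma hasDerivAt_slice_x (hf : ContDiff ℝ (⊤ : ℕ∞) (fun p : ℝ × ℝ => f p.1 p.2))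
    (x t : ℝ) : HasDerivAt (fun y => f y t) (pdx f x t) x := by
  have h1 : DifferentiableAt ℝ (fun p : ℝ × ℝ => f p.1 p.2) (x, t) :=
    (hf.differentiable (by simp)) (x, t)
  have h2 : DifferentiableAt ℝ (fun y : ℝ => (y, t)) x :=
    DifferentiableAt.prodMk differentiableAt_id (differentiableAt_const t)
  exact (h1.comp x h2).hasDerivAt

lemma hasDerivAt_slice_t (hf : ContDiff ℝ (⊤ : ℕ∞) (fun p : ℝ × ℝ => f p.1 p.2))
    (x t : ℝ) : HasDerivAt (fun s => f x s) (pdt f x t) t := by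
  have h1 : DifferentiableAt ℝ (fun p : ℝ × ℝ => f p.1 p.2) (x, t) :=
    (hf.differentiable (by simp)) (x, t)
  have h2 : DifferentiableAt ℝ (fun s : ℝ => (x, s)) t :=
    DifferentiableAt.prodMk (differentiableAt_const x) differentiableAt_id
  exact (h1.comp t h2).hasDerivAt

lemma pdx_eq_fderiv (hf : ContDiff ℝ (⊤ : ℕ∞) (fun p : ℝ × ℝ => f p.1 p.2))
    (x t : ℝ) : pdx f x t = fderiv ℝ (fun p : ℝ × ℝ => f p.1 p.2) (x, t) (1, 0) := by
  have h1 : HasFDerivAt (fun p : ℝ × ℝ => f p.1 p.2)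
      (fderiv ℝ (fun p : ℝ × ℝ => f p.1 p.2) (x, t)) (x, t) :=
    ((hf.differentiable (by simp)) (x, t)).hasFDerivAt
  have h2 : HasDerivAt (fun y : ℝ => (y, t)) ((1 : ℝ), (0 : ℝ)) x :=
    HasDerivAt.prodMk (hasDerivAt_id x) (hasDerivAt_const x t)
  exact (h1.comp_hasDerivAt x h2).deriv

lemma pdt_eq_fderiv (hf : ContDiff ℝ (⊤ : ℕ∞) (fun p : ℝ × ℝ => f p.1 p.2))
    (x t : ℝ) : pdt f x t = fderiv ℝ (fun p : ℝ × ℝ => f p.1 p.2) (x, t) (0, 1) := by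
  have h1 : HasFDerivAt (fun p : ℝ × ℝ => f p.1 p.2)
      (fderiv ℝ (fun p : ℝ × ℝ => f p.1 p.2) (x, t)) (x, t) :=
    ((hf.differentiable (by simp)) (x, t)).hasFDerivAt
  have h2 : HasDerivAt (fun s : ℝ => (x, s)) ((0 : ℝ), (1 : ℝ)) t :=
    HasDerivAt.prodMk (hasDerivAt_const t x) (hasDerivAt_id t)
  exact (h1.comp_hasDerivAt t h2).deriv

lemma contDiff_fderiv_apply (hf : ContDiff ℝ (⊤ : ℕ∞) (fun p : ℝ × ℝ => f p.1 p.2))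
    (v : ℝ × ℝ) :
    ContDiff ℝ (⊤ : ℕ∞) (fun p : ℝ × ℝ => fderiv ℝ (fun p : ℝ × ℝ => f p.1 p.2) p v) := by
  exact (ContinuousLinearMap.apply ℝ E v).contDiff.comp (hf.fderiv_right (by simp))

lemma contDiff_pdx (hf : ContDiff ℝ (⊤ : ℕ∞) (fun p : ℝ × ℝ => f p.1 p.2)) :
    ContDiff ℝ (⊤ : ℕ∞) (fun p : ℝ × ℝ => pdx f p.1 p.2) := by
  have : (fun p : ℝ × ℝ => pdx f p.1 p.2)
      = fun p : ℝ × ℝ => fderiv ℝ (fun p : ℝ × ℝ => f p.1 p.2) p (1, 0) := by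
    funext p
    exact pdx_eq_fderiv hf p.1 p.2
  rw [this]
  exact contDiff_fderiv_apply hf _

lemma contDiff_pdt (hf : ContDiff ℝ (⊤ : ℕ∞) (fun p : ℝ × ℝ => f p.1 p.2)) :
    ContDiff ℝ (⊤ : ℕ∞) (fun p : ℝ × ℝ => pdt f p.1 p.2) := by
  have : (fun p : ℝ × ℝ => pdt f p.1 p.2)
      = fun p : ℝ × ℝ => fderiv ℝ (fun p : ℝ × ℝ => f p.1 p.2) p (0, 1) := by
    funext p
    exact pdt_eq_fderiv hf p.1 p.2
  rw [this]
  exact contDiff_fderiv_apply hf _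

/-- Clairaut's theorem for smooth functions of two real variables. -/
lemma pdx_pdt_comm (hf : ContDiff ℝ (⊤ : ℕ∞) (fun p : ℝ × ℝ => f p.1 p.2)) (x t : ℝ) :
    pdx (pdt f) x t = pdt (pdx f) x t := by
  set F : ℝ × ℝ → E := fun p => f p.1 p.2 with hF
  set F' : ℝ × ℝ → (ℝ × ℝ) →L[ℝ] E := fderiv ℝ F with hF'
  have hF'd : ContDiff ℝ (⊤ : ℕ∞) F' := hf.fderiv_right (by simp)
  have h1 : ∀ y, HasFDerivAt F (F' y) y := fun y =>
    ((hf.differentiable (by simp)) y).hasFDerivAt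
  have h2 : HasFDerivAt F' (fderiv ℝ F' (x, t)) (x, t) :=
    ((hF'd.differentiable (by simp)) (x, t)).hasFDerivAt
  set F'' : (ℝ × ℝ) →L[ℝ] (ℝ × ℝ) →L[ℝ] E := fderiv ℝ F' (x, t) with hF''
  have sym := second_derivative_symmetric h1 h2
  -- pdx (pdt f) x t = F'' (1,0) (0,1)
  have key1 : pdx (pdt f) x t = F'' (1, 0) (0, 1) := by
    have heq : (fun y => pdt f y t) = fun y => F' (y, t) (0, 1) := by
      funext y
      exact pdt_eq_fderiv hf y t
    have hslice : HasDerivAt (fun y : ℝ => (y, t)) ((1 : ℝ), (0 : ℝ)) x :=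
      HasDerivAt.prodMk (hasDerivAt_id x) (hasDerivAt_const x t)
    have hcomp : HasDerivAt (fun y => F' (y, t)) (F'' (1, 0)) x :=
      h2.comp_hasDerivAt x hslice
    have happ : HasDerivAt (fun y => F' (y, t) (0, 1)) (F'' (1, 0) (0, 1)) x :=
      ((ContinuousLinearMap.apply ℝ E ((0 : ℝ), (1 : ℝ))).hasFDerivAt.comp_hasDerivAt x hcomp)
    show deriv (fun y => pdt f y t) x = _
    rw [heq]
    exact happ.deriv
  have key2 : pdt (pdx f) x t = F'' (0, 1) (1, 0) := by
    have heq : (fun s => pdx f x s) = fun s => F' (x, s) (1, 0) := by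
      funext s
      exact pdx_eq_fderiv hf x s
    have hslice : HasDerivAt (fun s : ℝ => (x, s)) ((0 : ℝ), (1 : ℝ)) t :=
      HasDerivAt.prodMk (hasDerivAt_const t x) (hasDerivAt_id t)
    have hcomp : HasDerivAt (fun s => F' (x, s)) (F'' (0, 1)) t :=
      h2.comp_hasDerivAt t hslice
    have happ : HasDerivAt (fun s => F' (x, s) (1, 0)) (F'' (0, 1) (1, 0)) t :=
      ((ContinuousLinearMap.apply ℝ E ((1 : ℝ), (0 : ℝ))).hasFDerivAt.comp_hasDerivAt t hcomp)
    show deriv (fun s => pdx f x s) t = _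
    rw [heq]
    exact happ.deriv
  rw [key1, key2, sym]

end Aux

/-- Pinkall: if `γ` solves the central affine curve flow `γ_t = (1/4)q_x γ - (1/2) q γ_x`,
then its central affine curvature `q` solves the KdV equation. -/
theorem curve_flow_implies_kdv
    (γ : ℝ → ℝ → Fin 2 → ℝ) (q : ℝ → ℝ → ℝ)
    (hγ : ContDiff ℝ (⊤ : ℕ∞) (fun p : ℝ × ℝ => γ p.1 p.2))
    (hq : ContDiff ℝ (⊤ : ℕ∞) (fun p : ℝ × ℝ => q p.1 p.2))
    (hne : ∀ x t, γ x t ≠ 0)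
    (hdet : ∀ x t, det2 (γ x t) (pdx γ x t) = 1)
    (hcurv : ∀ x t, pdx (pdx γ) x t = q x t • γ x t)
    (hflow : ∀ x t, pdt γ x t
        = ((1/4) * pdx q x t) • γ x t - ((1/2) * q x t) • pdx γ x t) :
    ∀ x t, pdt q x t = (1/4) * (pdx (pdx (pdx q)) x t - 6 * q x t * pdx q x t) := by
  have hγ1 : ContDiff ℝ (⊤ : ℕ∞) (fun p : ℝ × ℝ => pdx γ p.1 p.2) := contDiff_pdx hγ
  have hγ2 : ContDiff ℝ (⊤ : ℕ∞) (fun p : ℝ × ℝ => pdx (pdx γ) p.1 p.2) := contDiff_pdx hγ1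
  have hq1 : ContDiff ℝ (⊤ : ℕ∞) (fun p : ℝ × ℝ => pdx q p.1 p.2) := contDiff_pdx hq
  have hq2 : ContDiff ℝ (⊤ : ℕ∞) (fun p : ℝ × ℝ => pdx (pdx q) p.1 p.2) := contDiff_pdx hq1
  -- Step 1: pdx (pdt γ) = (q_xx/4 - q²/2) γ + (-q_x/4) γ_x
  have e1 : ∀ x t, pdx (pdt γ) x t
      = ((1/4) * pdx (pdx q) x t - (1/2) * q x t * q x t) • γ x t
        + (-(1/4) * pdx q x t) • pdx γ x t := by
    intro x t
    have heq : (fun y => pdt γ y t)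
        = fun y => ((1/4) * pdx q y t) • γ y t - ((1/2) * q y t) • pdx γ y t := by
      funext y; exact hflow y t
    have hA : HasDerivAt (fun y => (1/4 : ℝ) * pdx q y t) ((1/4) * pdx (pdx q) x t) x :=
      (hasDerivAt_slice_x hq1 x t).const_mul (1/4)
    have hB : HasDerivAt (fun y => (1/2 : ℝ) * q y t) ((1/2) * pdx q x t) x :=
      (hasDerivAt_slice_x hq x t).const_mul (1/2)
    have hG : HasDerivAt (fun y => γ y t) (pdx γ x t) x := hasDerivAt_slice_x hγ x t
    have hG1 : HasDerivAt (fun y => pdx γ y t) (pdx (pdx γ) x t) x :=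
      hasDerivAt_slice_x hγ1 x t
    have htot := (hA.smul hG).sub (hB.smul hG1)
    have : pdx (pdt γ) x t
        = (((1/4) * pdx q x t) • pdx γ x t + ((1/4) * pdx (pdx q) x t) • γ x t)
          - (((1/2) * q x t) • pdx (pdx γ) x t + ((1/2) * pdx q x t) • pdx γ x t) := by
      show deriv (fun y => pdt γ y t) x = _
      rw [heq]
      exact htot.deriv
    rw [this, hcurv x t]
    funext i
    simp only [Pi.add_apply, Pi.sub_apply, Pi.smul_apply, smul_eq_mul, Pi.neg_apply]
    ring
  -- Step 2: pdx (pdx (pdt γ)) = (q_xxx/4 - (5/4) q q_x) γ + (-q²/2) γ_x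
  have e2 : ∀ x t, pdx (pdx (pdt γ)) x t
      = ((1/4) * pdx (pdx (pdx q)) x t - (5/4) * q x t * pdx q x t) • γ x t
        + (-(1/2) * q x t * q x t) • pdx γ x t := by
    intro x t
    have heq : (fun y => pdx (pdt γ) y t)
        = fun y => ((1/4) * pdx (pdx q) y t - (1/2) * q y t * q y t) • γ y t
            + (-(1/4) * pdx q y t) • pdx γ y t := by
      funext y; exact e1 y t
    have hA : HasDerivAt (fun y => (1/4 : ℝ) * pdx (pdx q) y t - (1/2) * q y t * q y t)
        ((1/4) * pdx (pdx (pdx q)) x t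
          - ((1/2) * pdx q x t * q x t + (1/2) * q x t * pdx q x t)) x := by
      have h1 : HasDerivAt (fun y => (1/4 : ℝ) * pdx (pdx q) y t)
          ((1/4) * pdx (pdx (pdx q)) x t) x :=
        (hasDerivAt_slice_x hq2 x t).const_mul (1/4)
      have h2 : HasDerivAt (fun y => (1/2 : ℝ) * q y t) ((1/2) * pdx q x t) x :=
        (hasDerivAt_slice_x hq x t).const_mul (1/2)
      have h3 := h2.mul (hasDerivAt_slice_x hq x t)
      exact h1.sub h3
    have hB : HasDerivAt (fun y => -(1/4 : ℝ) * pdx q y t) (-(1/4) * pdx (pdx q) x t) x :=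
      (hasDerivAt_slice_x hq1 x t).const_mul (-(1/4))
    have hG : HasDerivAt (fun y => γ y t) (pdx γ x t) x := hasDerivAt_slice_x hγ x t
    have hG1 : HasDerivAt (fun y => pdx γ y t) (pdx (pdx γ) x t) x :=
      hasDerivAt_slice_x hγ1 x t
    have htot := (hA.smul hG).add (hB.smul hG1)
    have hv : pdx (pdx (pdt γ)) x t
        = (((1/4) * pdx (pdx q) x t - (1/2) * q x t * q x t) • pdx γ x t
            + ((1/4) * pdx (pdx (pdx q)) x t
              - ((1/2) * pdx q x t * q x t + (1/2) * q x t * pdx q x t)) • γ x t)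
          + ((-(1/4) * pdx q x t) • pdx (pdx γ) x t
            + (-(1/4) * pdx (pdx q) x t) • pdx γ x t) := by
      show deriv (fun y => pdx (pdt γ) y t) x = _
      rw [heq]
      exact htot.deriv
    rw [hv, hcurv x t]
    funext i
    simp only [Pi.add_apply, Pi.sub_apply, Pi.smul_apply, smul_eq_mul, Pi.neg_apply]
    ring
  -- Step 3: pdt (pdx (pdx γ)) = (q_t + (1/4) q q_x) γ + (-q²/2) γ_x
  have e3 : ∀ x t, pdt (pdx (pdx γ)) x t
      = (pdt q x t + (1/4) * q x t * pdx q x t) • γ x t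
        + (-(1/2) * q x t * q x t) • pdx γ x t := by
    intro x t
    have heq : (fun s => pdx (pdx γ) x s) = fun s => q x s • γ x s := by
      funext s; exact hcurv x s
    have hQ : HasDerivAt (fun s => q x s) (pdt q x t) t := hasDerivAt_slice_t hq x t
    have hG : HasDerivAt (fun s => γ x s) (pdt γ x t) t := hasDerivAt_slice_t hγ x t
    have htot := hQ.smul hG
    have hv : pdt (pdx (pdx γ)) x t
        = q x t • pdt γ x t + pdt q x t • γ x t := by
      show deriv (fun s => pdx (pdx γ) x s) t = _
      rw [heq]
      exact htot.deriv
    rw [hv, hflow x t]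
    funext i
    simp only [Pi.add_apply, Pi.sub_apply, Pi.smul_apply, smul_eq_mul, Pi.neg_apply]
    ring
  -- Step 4: mixed partials
  have e4 : ∀ x t, pdx (pdx (pdt γ)) x t = pdt (pdx (pdx γ)) x t := by
    intro x t
    have h1 : pdx (pdt γ) = pdt (pdx γ) := by
      funext y s; exact pdx_pdt_comm hγ y s
    calc pdx (pdx (pdt γ)) x t = pdx (pdt (pdx γ)) x t := by rw [h1]
      _ = pdt (pdx (pdx γ)) x t := pdx_pdt_comm hγ1 x t
  -- Step 5: equate coefficients using linear independence of γ, γ_x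
  intro x t
  have hvec := (e2 x t).symm.trans ((e4 x t).trans (e3 x t))
  set A := (1/4) * pdx (pdx (pdx q)) x t - (5/4) * q x t * pdx q x t with hA
  set A' := pdt q x t + (1/4) * q x t * pdx q x t with hA'
  set B := -(1/2) * q x t * q x t with hB
  have hc0 := congrFun hvec 0
  have hc1 := congrFun hvec 1
  simp only [Pi.add_apply, Pi.smul_apply, smul_eq_mul] at hc0 hc1
  have d := hdet x t
  unfold det2 at d
  have key : A = A' := by
    linear_combination (pdx γ x t 1) * hc0 - (pdx γ x t 0) * hc1 - (A - A') * d
  rw [hA, hA'] at key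
  linarith
end

section
/- Two curves γ₁, γ₂ : I → ℝ² \ {0} with det(γᵢ, (γᵢ)_x) = 1 have the same central affine curvature q if and only if there exists a constant matrix c ∈ SL(2,ℝ) with γ₂ = c·γ₁. -/
/-- A scalar solution of `w'' = q w` whose Wronskians with a fundamental pair `u, v`
vanish at `0` is identically zero. -/
lemma wronski_zero (q u v w u' v' w' : ℝ → ℝ)
    (hu : ∀ x, HasDerivAt u (u' x) x) (hu' : ∀ x, HasDerivAt u' (q x * u x) x)
    (hv : ∀ x, HasDerivAt v (v' x) x) (hv' : ∀ x, HasDerivAt v' (q x * v x) x)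
    (hw : ∀ x, HasDerivAt w (w' x) x) (hw' : ∀ x, HasDerivAt w' (q x * w x) x)
    (hW : ∀ x, u x * v' x - v x * u' x = 1)
    (hw0 : w 0 = 0) (hw'0 : w' 0 = 0) : ∀ x, w x = 0 := by
  have hf : ∀ x, HasDerivAt (fun t => u t * w' t - u' t * w t) 0 x := by
    intro x
    have h := ((hu x).mul (hw' x)).sub ((hu' x).mul (hw x))
    exact h.congr_deriv (by ring)
  have hg : ∀ x, HasDerivAt (fun t => v t * w' t - v' t * w t) 0 x := by
    intro x
    have h := ((hv x).mul (hw' x)).sub ((hv' x).mul (hw x))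
    exact h.congr_deriv (by ring)
  have hfc : ∀ x, u x * w' x - u' x * w x = 0 := by
    intro x
    have := is_const_of_deriv_eq_zero (f := fun t => u t * w' t - u' t * w t)
      (fun y => (hf y).differentiableAt) (fun y => (hf y).deriv) x 0
    simp only [hw0, hw'0, mul_zero, sub_zero] at this
    simpa using this
  have hgc : ∀ x, v x * w' x - v' x * w x = 0 := by
    intro x
    have := is_const_of_deriv_eq_zero (f := fun t => v t * w' t - v' t * w t)
      (fun y => (hg y).differentiableAt) (fun y => (hg y).deriv) x 0
    simp only [hw0, hw'0, mul_zero, sub_zero] at this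
    simpa using this
  intro x
  have h1 := hfc x
  have h2 := hgc x
  have h3 := hW x
  linear_combination (v x) * h1 - (u x) * h2 - (w x) * h3

/-- Componentwise derivatives of a smooth curve in the plane. -/
lemma comp_derivs (γ : ℝ → Fin 2 → ℝ) (h : ContDiff ℝ (⊤ : ℕ∞) γ) :
    (∀ x i, HasDerivAt (fun t => γ t i) (deriv γ x i) x) ∧
    (∀ x i, HasDerivAt (fun t => deriv γ t i) (deriv (deriv γ) x i) x) := by
  have h1 : Differentiable ℝ γ := h.differentiable (by simp)
  have h' : ContDiff ℝ (↑(⊤ : ℕ∞)) γ := h.of_le (by simp)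
  have h2 : Differentiable ℝ (deriv γ) :=
    ((contDiff_infty_iff_deriv.mp h').2).differentiable (by simp)
  exact ⟨fun x i => hasDerivAt_pi.mp (h1 x).hasDerivAt i,
         fun x i => hasDerivAt_pi.mp (h2 x).hasDerivAt i⟩

/-- Two central-affine parametrized curves have the same central affine curvature iff
they differ by a constant matrix in `SL(2,ℝ)`. -/
theorem same_curvature_iff_sl2_equiv
    (γ₁ γ₂ : ℝ → Fin 2 → ℝ) (q₁ q₂ : ℝ → ℝ)
    (hγ₁ : ContDiff ℝ (⊤ : ℕ∞) γ₁) (hγ₂ : ContDiff ℝ (⊤ : ℕ∞) γ₂)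
    (hne₁ : ∀ x, γ₁ x ≠ 0) (hne₂ : ∀ x, γ₂ x ≠ 0)
    (hdet₁ : ∀ x, det2 (γ₁ x) (deriv γ₁ x) = 1)
    (hdet₂ : ∀ x, det2 (γ₂ x) (deriv γ₂ x) = 1)
    (hq₁ : ContDiff ℝ (⊤ : ℕ∞) q₁) (hq₂ : ContDiff ℝ (⊤ : ℕ∞) q₂)
    (hcurv₁ : ∀ x, deriv (deriv γ₁) x = q₁ x • γ₁ x)
    (hcurv₂ : ∀ x, deriv (deriv γ₂) x = q₂ x • γ₂ x) :
    q₁ = q₂ ↔ ∃ c : Matrix (Fin 2) (Fin 2) ℝ, c.det = 1 ∧ ∀ x, γ₂ x = c.mulVec (γ₁ x) := by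
  obtain ⟨hd₁, hd₁'⟩ := comp_derivs γ₁ hγ₁
  obtain ⟨hd₂, hd₂'⟩ := comp_derivs γ₂ hγ₂
  -- componentwise second derivative
  have hc₁ : ∀ x i, HasDerivAt (fun t => deriv γ₁ t i) (q₁ x * γ₁ x i) x := by
    intro x i
    have := hd₁' x i
    rwa [hcurv₁ x, Pi.smul_apply, smul_eq_mul] at this
  have hc₂ : ∀ x i, HasDerivAt (fun t => deriv γ₂ t i) (q₂ x * γ₂ x i) x := by
    intro x i
    have := hd₂' x i
    rwa [hcurv₂ x, Pi.smul_apply, smul_eq_mul] at this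
  constructor
  · intro hq
    subst hq
    set a : Fin 2 → ℝ := γ₁ 0 with ha
    set d : Fin 2 → ℝ := deriv γ₁ 0 with hd
    set b : Fin 2 → ℝ := γ₂ 0 with hb
    set e : Fin 2 → ℝ := deriv γ₂ 0 with he
    have hD1 : a 0 * d 1 - a 1 * d 0 = 1 := hdet₁ 0
    have hD2 : b 0 * e 1 - b 1 * e 0 = 1 := hdet₂ 0
    refine ⟨Matrix.of fun i j => if j = 0 then b i * d 1 - e i * a 1 else a 0 * e i - d 0 * b i,
      ?_, ?_⟩
    · rw [Matrix.det_fin_two]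
      simp only [Matrix.of_apply, reduceIte, if_neg (by decide : (1 : Fin 2) ≠ 0), if_pos rfl]
      linear_combination (b 0 * e 1 - b 1 * e 0) * hD1 + hD2
    · intro x
      funext i
      set c : Matrix (Fin 2) (Fin 2) ℝ :=
        Matrix.of fun i j => if j = 0 then b i * d 1 - e i * a 1 else a 0 * e i - d 0 * b i with hcdef
      have hc0 : c i 0 = b i * d 1 - e i * a 1 := by simp [hcdef]
      have hc1 : c i 1 = a 0 * e i - d 0 * b i := by
        simp [hcdef, Matrix.of_apply, if_neg (by decide : (1 : Fin 2) ≠ 0)]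
      have hmv : c.mulVec (γ₁ x) i = c i 0 * γ₁ x 0 + c i 1 * γ₁ x 1 := by
        simp [Matrix.mulVec, dotProduct, Fin.sum_univ_two]
      rw [hmv, hc0, hc1]
      -- define w and apply wronski_zero
      have key : ∀ t, γ₂ t i - ((b i * d 1 - e i * a 1) * γ₁ t 0
          + (a 0 * e i - d 0 * b i) * γ₁ t 1) = 0 := by
        apply wronski_zero q₁ (fun t => γ₁ t 0) (fun t => γ₁ t 1)
          (fun t => γ₂ t i - ((b i * d 1 - e i * a 1) * γ₁ t 0 + (a 0 * e i - d 0 * b i) * γ₁ t 1))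
          (fun t => deriv γ₁ t 0) (fun t => deriv γ₁ t 1)
          (fun t => deriv γ₂ t i - ((b i * d 1 - e i * a 1) * deriv γ₁ t 0
            + (a 0 * e i - d 0 * b i) * deriv γ₁ t 1))
        · exact fun x => hd₁ x 0
        · exact fun x => hc₁ x 0
        · exact fun x => hd₁ x 1
        · exact fun x => hc₁ x 1
        · intro x
          exact (hd₂ x i).sub (((hd₁ x 0).const_mul _).add ((hd₁ x 1).const_mul _))
        · intro x
          have h := (hc₂ x i).sub ((HasDerivAt.const_mul (b i * d 1 - e i * a 1) (hc₁ x 0)).add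
            (HasDerivAt.const_mul (a 0 * e i - d 0 * b i) (hc₁ x 1)))
          exact h.congr_deriv (by ring)
        · exact fun x => hdet₁ x
        · show b i - ((b i * d 1 - e i * a 1) * a 0 + (a 0 * e i - d 0 * b i) * a 1) = 0
          linear_combination (-(b i)) * hD1
        · show e i - ((b i * d 1 - e i * a 1) * d 0 + (a 0 * e i - d 0 * b i) * d 1) = 0
          linear_combination (-(e i)) * hD1
      have := key x
      linarith [this]
  · rintro ⟨c, hcdet, hc⟩
    funext x
    have hmv : ∀ t i, γ₂ t i = c i 0 * γ₁ t 0 + c i 1 * γ₁ t 1 := by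
      intro t i
      rw [hc t]
      simp [Matrix.mulVec, dotProduct, Fin.sum_univ_two]
    have hA : ∀ i, ∀ t, deriv γ₂ t i = c i 0 * deriv γ₁ t 0 + c i 1 * deriv γ₁ t 1 := by
      intro i t
      have h2 : HasDerivAt (fun s => γ₂ s i) (c i 0 * deriv γ₁ t 0 + c i 1 * deriv γ₁ t 1) t := by
        have : (fun s => γ₂ s i) = fun s => c i 0 * γ₁ s 0 + c i 1 * γ₁ s 1 :=
          funext fun s => hmv s i
        rw [this]
        exact ((hd₁ t 0).const_mul _).add ((hd₁ t 1).const_mul _)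
      exact (hd₂ t i).unique h2
    have hB : ∀ i, q₂ x * γ₂ x i = q₁ x * γ₂ x i := by
      intro i
      have h2 : HasDerivAt (fun s => deriv γ₂ s i)
          (c i 0 * (q₁ x * γ₁ x 0) + c i 1 * (q₁ x * γ₁ x 1)) x := by
        have : (fun s => deriv γ₂ s i) = fun s => c i 0 * deriv γ₁ s 0 + c i 1 * deriv γ₁ s 1 :=
          funext fun s => hA i s
        rw [this]
        exact ((hc₁ x 0).const_mul _).add ((hc₁ x 1).const_mul _)
      have h3 := (hc₂ x i).unique h2
      rw [h3, hmv x i]; ring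
    by_contra hne
    have hne' : q₂ x - q₁ x ≠ 0 := sub_ne_zero.mpr (fun h => hne h.symm)
    apply hne₂ x
    funext i
    have := hB i
    have h0 : (q₂ x - q₁ x) * γ₂ x i = 0 := by linarith [this]
    have := mul_eq_zero.mp h0
    simpa [hne'] using this
end

section
/- Let ξ₁ ≠ ξ₂ and k₁ ≠ k₂ be real constants, and set η₁ = -ξ₂ + (k₁² - k₂²)/(ξ₁ - ξ₂) and η₂ = -ξ₁ + (k₁² - k₂²)/(ξ₁ - ξ₂). Then the simple factors satisfy r_{η₂,k₂}(λ)·r_{ξ₁,k₁}(λ) = r_{η₁,k₁}(λ)·r_{ξ₂,k₂}(λ) for all λ. -/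
/-!
Both products have (1,0) entry `η + ξ`, so the two sums must agree; calling the common value `s`,
every remaining entry of the difference of the two products is a multiple of
`s * (ξ₁ - ξ₂) - (k₁ ^ 2 - k₂ ^ 2)`, which vanishes for `s = (k₁ ^ 2 - k₂ ^ 2) / (ξ₁ - ξ₂)`.
-/

/-- The simple factor `r_{ξ,k}(λ)`. -/
noncomputable def simpleFactor (ξ k lam : ℝ) : Matrix (Fin 2) (Fin 2) ℝ :=
  !![ξ, ξ ^ 2 - k ^ 2 + lam; 1, ξ]

theorem simpleFactor_permutability_of_mul_sub_eq {ξ₁ ξ₂ k₁ k₂ s : ℝ}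
    (hs : s * (ξ₁ - ξ₂) = k₁ ^ 2 - k₂ ^ 2) (lam : ℝ) :
    simpleFactor (s - ξ₁) k₂ lam * simpleFactor ξ₁ k₁ lam
      = simpleFactor (s - ξ₂) k₁ lam * simpleFactor ξ₂ k₂ lam := by
  simp only [simpleFactor, Matrix.mul_fin_two, EmbeddingLike.apply_eq_iff_eq, Matrix.vecCons_inj,
    and_true]
  refine ⟨⟨?_, ?_⟩, ?_, ?_⟩
  · linear_combination (-1 : ℝ) * hs
  · linear_combination (-(ξ₁ + ξ₂) + s) * hs
  · ring
  · linear_combination hs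

theorem simpleFactor_permutability_general
    (ξ₁ ξ₂ k₁ k₂ : ℝ) (hξ : ξ₁ ≠ ξ₂)
    (η₁ η₂ : ℝ)
    (hη₁ : η₁ = -ξ₂ + (k₁ ^ 2 - k₂ ^ 2) / (ξ₁ - ξ₂))
    (hη₂ : η₂ = -ξ₁ + (k₁ ^ 2 - k₂ ^ 2) / (ξ₁ - ξ₂)) :
    ∀ lam : ℝ, simpleFactor η₂ k₂ lam * simpleFactor ξ₁ k₁ lam
      = simpleFactor η₁ k₁ lam * simpleFactor ξ₂ k₂ lam := by
  set s := (k₁ ^ 2 - k₂ ^ 2) / (ξ₁ - ξ₂)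
  have hs : s * (ξ₁ - ξ₂) = k₁ ^ 2 - k₂ ^ 2 := div_mul_cancel₀ _ (sub_ne_zero.mpr hξ)
  rw [hη₁, hη₂, neg_add_eq_sub, neg_add_eq_sub]
  exact simpleFactor_permutability_of_mul_sub_eq hs

/-- Permutability relation for simple factors:
`r_{η₂,k₂} r_{ξ₁,k₁} = r_{η₁,k₁} r_{ξ₂,k₂}`. -/
theorem simpleFactor_permutability
    (ξ₁ ξ₂ k₁ k₂ : ℝ) (hξ : ξ₁ ≠ ξ₂) (hk : k₁ ≠ k₂)
    (η₁ η₂ : ℝ)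
    (hη₁ : η₁ = -ξ₂ + (k₁ ^ 2 - k₂ ^ 2) / (ξ₁ - ξ₂))
    (hη₂ : η₂ = -ξ₁ + (k₁ ^ 2 - k₂ ^ 2) / (ξ₁ - ξ₂)) :
    ∀ lam : ℝ, simpleFactor η₂ k₂ lam * simpleFactor ξ₁ k₁ lam
      = simpleFactor η₁ k₁ lam * simpleFactor ξ₂ k₂ lam :=
  simpleFactor_permutability_general ξ₁ ξ₂ k₁ k₂ hξ η₁ η₂ hη₁ hη₂
end

section
/- Let k ∈ ℝ be a nonzero constant and let γ be a solution of γ_t = (1/4)q_x γ - (1/2)q γ_x with central affine curvature q. If A solves the Bäcklund system A_x = q - A² + k², A_t = (q_{xx} - 2q²)/4 - (q_x/2)A + q(A² + k²)/2 - k²(A² - k²), then q̃ := -q + 2(A² - k²) again solves the KdV equation q̃_t = (1/4)(q̃_{xxx} - 6 q̃ q̃_x). -/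
/-- If the uncurried function is smooth, so is the uncurried `pdx`. -/
lemma pdx_smooth {f : ℝ → ℝ → ℝ} (hf : ContDiff ℝ (⊤ : ℕ∞) (fun p : ℝ × ℝ => f p.1 p.2)) :
    ContDiff ℝ (⊤ : ℕ∞) (fun p : ℝ × ℝ => pdx f p.1 p.2) := by
  have h : (fun p : ℝ × ℝ => pdx f p.1 p.2)
      = fun p : ℝ × ℝ => fderiv ℝ (fun y => f y p.2) p.1 1 := by
    funext p
    simp only [pdx]
    exact (fderiv_apply_one_eq_deriv).symm
  rw [h]
  have huncurry : ContDiff ℝ (⊤ : ℕ∞) (Function.uncurry (fun (p : ℝ × ℝ) (y : ℝ) => f y p.2)) := by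
    have : Function.uncurry (fun (p : ℝ × ℝ) (y : ℝ) => f y p.2)
        = (fun p : ℝ × ℝ => f p.1 p.2) ∘ (fun z : (ℝ × ℝ) × ℝ => (z.2, z.1.2)) := rfl
    rw [this]
    exact hf.comp (contDiff_snd.prodMk (contDiff_snd.comp contDiff_fst))
  exact ContDiff.fderiv_apply huncurry contDiff_fst contDiff_const (by simp)

/-- Space derivative as `HasDerivAt`. -/
lemma hasDerivAt_pdx {f : ℝ → ℝ → ℝ} (hf : ContDiff ℝ (⊤ : ℕ∞) (fun p : ℝ × ℝ => f p.1 p.2))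
    (x t : ℝ) : HasDerivAt (fun y => f y t) (pdx f x t) x := by
  have hd : DifferentiableAt ℝ (fun y => f y t) x := by
    have h1 : (fun y => f y t) = (fun p : ℝ × ℝ => f p.1 p.2) ∘ (fun y : ℝ => (y, t)) := rfl
    rw [h1]
    exact ((hf.differentiable (by simp)) (x, t)).comp x
      (differentiableAt_id.prodMk (differentiableAt_const t))
  simpa [pdx] using hd.hasDerivAt

/-- Time derivative as `HasDerivAt`. -/
lemma hasDerivAt_pdt {f : ℝ → ℝ → ℝ} (hf : ContDiff ℝ (⊤ : ℕ∞) (fun p : ℝ × ℝ => f p.1 p.2))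
    (x t : ℝ) : HasDerivAt (fun s => f x s) (pdt f x t) t := by
  have hd : DifferentiableAt ℝ (fun s => f x s) t := by
    have h1 : (fun s => f x s) = (fun p : ℝ × ℝ => f p.1 p.2) ∘ (fun s : ℝ => (x, s)) := rfl
    rw [h1]
    exact ((hf.differentiable (by simp)) (x, t)).comp t
      ((differentiableAt_const x).prodMk differentiableAt_id)
  simpa [pdt] using hd.hasDerivAt

/-- Bäcklund transformation: if `γ` solves the central affine curve flow with curvature `q`
(a solution of KdV) and `A` solves the Bäcklund system `(BT)_{q,k}` with `k ≠ 0`, then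
`q̃ = -q + 2(A² - k²)` again solves KdV. -/
theorem backlund_gives_kdv_solution
    (k : ℝ) (hk : k ≠ 0)
    (γ : ℝ → ℝ → Fin 2 → ℝ) (q A : ℝ → ℝ → ℝ)
    (hγ : ContDiff ℝ (⊤ : ℕ∞) (fun p : ℝ × ℝ => γ p.1 p.2))
    (hq : ContDiff ℝ (⊤ : ℕ∞) (fun p : ℝ × ℝ => q p.1 p.2))
    (hA : ContDiff ℝ (⊤ : ℕ∞) (fun p : ℝ × ℝ => A p.1 p.2))
    (hne : ∀ x t, γ x t ≠ 0)
    (hdet : ∀ x t, det2 (γ x t) (pdx γ x t) = 1)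
    (hcurv : ∀ x t, pdx (pdx γ) x t = q x t • γ x t)
    (hflow : ∀ x t, pdt γ x t
        = ((1/4) * pdx q x t) • γ x t - ((1/2) * q x t) • pdx γ x t)
    (hkdv : ∀ x t, pdt q x t = (1/4) * (pdx (pdx (pdx q)) x t - 6 * q x t * pdx q x t))
    (hAx : ∀ x t, pdx A x t = q x t - A x t ^ 2 + k ^ 2)
    (hAt : ∀ x t, pdt A x t
        = (pdx (pdx q) x t - 2 * q x t ^ 2) / 4 - (pdx q x t / 2) * A x t
          + q x t * (A x t ^ 2 + k ^ 2) / 2 - k ^ 2 * (A x t ^ 2 - k ^ 2)) :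
    ∀ x t, pdt (fun y s => -q y s + 2 * (A y s ^ 2 - k ^ 2)) x t
      = (1/4) * (pdx (pdx (pdx (fun y s => -q y s + 2 * (A y s ^ 2 - k ^ 2)))) x t
          - 6 * (-q x t + 2 * (A x t ^ 2 - k ^ 2))
            * pdx (fun y s => -q y s + 2 * (A y s ^ 2 - k ^ 2)) x t) := by
  have hq1 : ContDiff ℝ (⊤ : ℕ∞) (fun p : ℝ × ℝ => pdx q p.1 p.2) := pdx_smooth hq
  have hq2 : ContDiff ℝ (⊤ : ℕ∞) (fun p : ℝ × ℝ => pdx (pdx q) p.1 p.2) := pdx_smooth hq1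
  have dq : ∀ x t, HasDerivAt (fun y => q y t) (pdx q x t) x := hasDerivAt_pdx hq
  have dq1 : ∀ x t, HasDerivAt (fun y => pdx q y t) (pdx (pdx q) x t) x := hasDerivAt_pdx hq1
  have dq2 : ∀ x t, HasDerivAt (fun y => pdx (pdx q) y t) (pdx (pdx (pdx q)) x t) x :=
    hasDerivAt_pdx hq2
  have dA : ∀ x t, HasDerivAt (fun y => A y t) (pdx A x t) x := hasDerivAt_pdx hA
  have dtq : ∀ x t, HasDerivAt (fun s => q x s) (pdt q x t) t := hasDerivAt_pdt hq
  have dtA : ∀ x t, HasDerivAt (fun s => A x s) (pdt A x t) t := hasDerivAt_pdt hA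
  -- first space derivative of q̃
  have hux : ∀ x t, pdx (fun y s => -q y s + 2 * (A y s ^ 2 - k ^ 2)) x t
      = -pdx q x t + 4 * A x t * (q x t - A x t ^ 2 + k ^ 2) := by
    intro x t
    have h := ((dq x t).neg.add ((((dA x t).pow 2).sub_const (k ^ 2)).const_mul 2))
    rw [hAx x t] at h
    exact h.deriv.trans (by push_cast; ring)
  have hfun1 : pdx (fun y s => -q y s + 2 * (A y s ^ 2 - k ^ 2))
      = fun y s => -pdx q y s + 4 * A y s * (q y s - A y s ^ 2 + k ^ 2) := by
    funext y s; exact hux y s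
  -- second space derivative
  have huxx : ∀ x t, pdx (fun y s => -pdx q y s + 4 * A y s * (q y s - A y s ^ 2 + k ^ 2)) x t
      = -pdx (pdx q) x t + 4 * (q x t - A x t ^ 2 + k ^ 2) ^ 2 + 4 * A x t * pdx q x t
        - 8 * A x t ^ 2 * (q x t - A x t ^ 2 + k ^ 2) := by
    intro x t
    have h := (dq1 x t).neg.add
      (((dA x t).const_mul 4).mul (((dq x t).sub ((dA x t).pow 2)).add_const (k ^ 2)))
    rw [hAx x t] at h
    exact h.deriv.trans (by simp only [Pi.sub_apply, Pi.pow_apply]; push_cast; ring)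
  have hfun2 : pdx (fun y s => -pdx q y s + 4 * A y s * (q y s - A y s ^ 2 + k ^ 2))
      = fun y s => -pdx (pdx q) y s + 4 * (q y s - A y s ^ 2 + k ^ 2) ^ 2
          + 4 * A y s * pdx q y s - 8 * A y s ^ 2 * (q y s - A y s ^ 2 + k ^ 2) := by
    funext y s; exact huxx y s
  -- third space derivative
  have huxxx : ∀ x t, pdx (fun y s => -pdx (pdx q) y s + 4 * (q y s - A y s ^ 2 + k ^ 2) ^ 2
          + 4 * A y s * pdx q y s - 8 * A y s ^ 2 * (q y s - A y s ^ 2 + k ^ 2)) x t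
      = -pdx (pdx (pdx q)) x t
        + 8 * (q x t - A x t ^ 2 + k ^ 2)
            * (pdx q x t - 2 * A x t * (q x t - A x t ^ 2 + k ^ 2))
        + 4 * (q x t - A x t ^ 2 + k ^ 2) * pdx q x t + 4 * A x t * pdx (pdx q) x t
        - 16 * A x t * (q x t - A x t ^ 2 + k ^ 2) ^ 2
        - 8 * A x t ^ 2 * (pdx q x t - 2 * A x t * (q x t - A x t ^ 2 + k ^ 2)) := by
    intro x t
    have hX := ((dq x t).sub ((dA x t).pow 2)).add_const (k ^ 2)
    have h := (((dq2 x t).neg.add ((hX.pow 2).const_mul 4)).add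
        (((dA x t).const_mul 4).mul (dq1 x t))).sub
      ((((dA x t).pow 2).const_mul 8).mul hX)
    rw [hAx x t] at h
    exact h.deriv.trans (by simp only [Pi.sub_apply, Pi.pow_apply]; push_cast; ring)
  -- time derivative of q̃
  have hut : ∀ x t, pdt (fun y s => -q y s + 2 * (A y s ^ 2 - k ^ 2)) x t
      = -pdt q x t + 4 * A x t * pdt A x t := by
    intro x t
    have h := ((dtq x t).neg.add ((((dtA x t).pow 2).sub_const (k ^ 2)).const_mul 2))
    exact h.deriv.trans (by push_cast; ring)
  intro x t
  have key3 : pdx (pdx (pdx (fun y s => -q y s + 2 * (A y s ^ 2 - k ^ 2)))) x t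
      = -pdx (pdx (pdx q)) x t
        + 8 * (q x t - A x t ^ 2 + k ^ 2)
            * (pdx q x t - 2 * A x t * (q x t - A x t ^ 2 + k ^ 2))
        + 4 * (q x t - A x t ^ 2 + k ^ 2) * pdx q x t + 4 * A x t * pdx (pdx q) x t
        - 16 * A x t * (q x t - A x t ^ 2 + k ^ 2) ^ 2
        - 8 * A x t ^ 2 * (pdx q x t - 2 * A x t * (q x t - A x t ^ 2 + k ^ 2)) := by
    rw [hfun1, hfun2]; exact huxxx x t
  rw [hut x t, key3, hux x t, hkdv x t, hAt x t]
  ring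
end

section
/- The first-order system A_x = q - A² + k², A_t = (q_{xx}-2q²)/4 - (q_x/2)A + q(A²+k²)/2 - k²(A²-k²) is compatible (i.e., (A_x)_t = (A_t)_x identically in A) if and only if q is a solution of the KdV equation q_t = (1/4)(q_{xxx} - 6 q q_x). -/
/-- The Bäcklund system `A_x = q - A² + k²`,
`A_t = (q_{xx}-2q²)/4 - (q_x/2)A + q(A²+k²)/2 - k²(A²-k²)` is compatible — that is,
the cross-derivatives `(A_x)_t` and `(A_t)_x`, computed by substituting the equations
themselves for the derivatives of `A`, agree identically in the value `a` of `A` —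
if and only if `q` solves the KdV equation. -/
theorem backlund_compatibility_iff_kdv
    (k : ℝ) (q : ℝ → ℝ → ℝ)
    (hq : ContDiff ℝ (⊤ : ℕ∞) (fun p : ℝ × ℝ => q p.1 p.2)) :
    (∀ x t a : ℝ,
      -- (A_x)_t computed from the system:
      pdt q x t
        - 2 * a * ((pdx (pdx q) x t - 2 * q x t ^ 2) / 4 - (pdx q x t / 2) * a
            + q x t * (a ^ 2 + k ^ 2) / 2 - k ^ 2 * (a ^ 2 - k ^ 2))
      -- (A_t)_x computed from the system:
      = (pdx (pdx (pdx q)) x t - 4 * q x t * pdx q x t) / 4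
        - (pdx (pdx q) x t / 2) * a
        - (pdx q x t / 2) * (q x t - a ^ 2 + k ^ 2)
        + (pdx q x t / 2) * (a ^ 2 + k ^ 2)
        + q x t * a * (q x t - a ^ 2 + k ^ 2)
        - 2 * k ^ 2 * a * (q x t - a ^ 2 + k ^ 2))
    ↔ (∀ x t, pdt q x t
        = (1/4) * (pdx (pdx (pdx q)) x t - 6 * q x t * pdx q x t)) := by
  constructor
  · intro h x t
    have h0 := h x t 0
    linear_combination h0
  · intro h x t a
    linear_combination h x t
end

section
/- The curve γ̃(x,t) = (tanh(kx + k³t), x·tanh(kx + k³t) - 1/k)ᵗ satisfies det(γ̃, γ̃_x) = 1, its central affine curvature is q̃(x,t) = -2k²·sech²(kx + k³t) (i.e., γ̃_{xx} = q̃·γ̃), and γ̃ solves the central affine curve flow γ̃_t = (1/4)q̃_x·γ̃ - (1/2)q̃·γ̃_x. -/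
open Real

/-- The 1-soliton curve `γ̃`. -/
noncomputable def solCurve (k : ℝ) : ℝ → ℝ → Fin 2 → ℝ :=
  fun x t => ![Real.tanh (k * x + k ^ 3 * t),
               x * Real.tanh (k * x + k ^ 3 * t) - 1 / k]

/-- The 1-soliton curvature `q̃ = -2k² sech²(kx + k³t)`. -/
noncomputable def solQ (k : ℝ) : ℝ → ℝ → ℝ :=
  fun x t => -2 * k ^ 2 * (1 / Real.cosh (k * x + k ^ 3 * t)) ^ 2

/-!
Everything is a polynomial in `τ = tanh (k x + k³ t)`, because `τ_x = k (1 - τ²)`,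
`τ_t = k³ (1 - τ²)` and `sech² = 1 - tanh²`. The curvature equation is then a polynomial
identity, while the determinant and the flow both reduce to `τ² + (1 - τ²) = 1`.
-/

theorem HasDerivAt.tanh {f : ℝ → ℝ} {f' x : ℝ} (hf : HasDerivAt f f' x) :
    HasDerivAt (fun y => tanh (f y)) ((1 - tanh (f x) ^ 2) * f') x := by
  have hc : Real.cosh (f x) ≠ 0 := (cosh_pos _).ne'
  simp only [tanh_eq_sinh_div_cosh]
  refine (hf.sinh.div hf.cosh hc).congr_deriv ?_
  field_simp

theorem Real.one_div_cosh_sq (x : ℝ) : (1 / cosh x) ^ 2 = 1 - tanh x ^ 2 := by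
  have hc : cosh x ≠ 0 := (cosh_pos x).ne'
  rw [tanh_eq_sinh_div_cosh]
  field_simp
  linear_combination -cosh_sq_sub_sinh_sq x

theorem HasDerivAt.vecCons₂ {𝕜 F : Type*} [NontriviallyNormedField 𝕜] [NormedAddCommGroup F]
    [NormedSpace 𝕜 F] {f g : 𝕜 → F} {f' g' : F} {x : 𝕜} (hf : HasDerivAt f f' x)
    (hg : HasDerivAt g g' x) : HasDerivAt (fun y => ![f y, g y]) ![f', g'] x :=
  hf.finCons (hg.finCons ((hasDerivAt_const x _).congr_deriv (Subsingleton.elim _ _)))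

noncomputable def solTanh (k x t : ℝ) : ℝ := tanh (k * x + k ^ 3 * t)

section
variable (k x t : ℝ)

theorem solCurve_eq : solCurve k x t = ![solTanh k x t, x * solTanh k x t - 1 / k] := rfl

theorem solQ_eq : solQ k x t = -2 * k ^ 2 * (1 - solTanh k x t ^ 2) := by
  rw [solQ, one_div_cosh_sq, solTanh]

theorem hasDerivAt_solTanh_x :
    HasDerivAt (fun y => solTanh k y t) (k * (1 - solTanh k x t ^ 2)) x := by
  have hw : HasDerivAt (fun y => k * y + k ^ 3 * t) k x := by
    simpa using ((hasDerivAt_id x).const_mul k).add_const (k ^ 3 * t)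
  exact hw.tanh.congr_deriv (mul_comm _ _)

theorem hasDerivAt_solTanh_t :
    HasDerivAt (fun s => solTanh k x s) (k ^ 3 * (1 - solTanh k x t ^ 2)) t := by
  have hw : HasDerivAt (fun s => k * x + k ^ 3 * s) (k ^ 3) t := by
    simpa using ((hasDerivAt_id t).const_mul (k ^ 3)).const_add (k * x)
  exact hw.tanh.congr_deriv (mul_comm _ _)

theorem pdx_solCurve : pdx (solCurve k) x t =
    ![k * (1 - solTanh k x t ^ 2), solTanh k x t + x * (k * (1 - solTanh k x t ^ 2))] := by
  have hτ := hasDerivAt_solTanh_x k x t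
  refine (hτ.vecCons₂ (((hasDerivAt_id' x).fun_mul hτ).sub_const _)).deriv.trans ?_
  simp only [one_mul]

theorem pdt_solCurve : pdt (solCurve k) x t =
    ![k ^ 3 * (1 - solTanh k x t ^ 2), x * (k ^ 3 * (1 - solTanh k x t ^ 2))] := by
  have hτ := hasDerivAt_solTanh_t k x t
  exact (hτ.vecCons₂ ((hτ.const_mul x).sub_const _)).deriv

theorem pdx_solQ : pdx (solQ k) x t =
    4 * k ^ 3 * solTanh k x t * (1 - solTanh k x t ^ 2) := by
  have hq := (((hasDerivAt_solTanh_x k x t).fun_pow 2).const_sub 1).const_mul (-2 * k ^ 2)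
  simp only [pdx, solQ_eq, hq.deriv]
  push_cast
  ring

theorem pdx_pdx_solCurve : pdx (pdx (solCurve k)) x t =
    ![-2 * k ^ 2 * solTanh k x t * (1 - solTanh k x t ^ 2),
      2 * k * (1 - solTanh k x t ^ 2)
        - 2 * k ^ 2 * x * solTanh k x t * (1 - solTanh k x t ^ 2)] := by
  have hτ := hasDerivAt_solTanh_x k x t
  have hS := ((hτ.fun_pow 2).const_sub 1).const_mul k
  have h := hS.vecCons₂ (hτ.fun_add ((hasDerivAt_id' x).fun_mul hS))
  show deriv (fun y => pdx (solCurve k) y t) x = _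
  simp only [pdx_solCurve]
  refine h.deriv.trans ?_
  ext i
  fin_cases i <;>
  · simp only [Fin.zero_eta, Fin.mk_one, Matrix.cons_val_zero, Matrix.cons_val_one,
      Matrix.cons_val_fin_one]
    ring

end

/-- The explicit 1-soliton curve is central-affine parametrized, has central affine
curvature `q̃ = -2k² sech²(kx+k³t)`, and solves the central affine curve flow. -/
theorem one_soliton_curve (k : ℝ) (hk : k ≠ 0) :
    (∀ x t, det2 (solCurve k x t) (pdx (solCurve k) x t) = 1) ∧
    (∀ x t, pdx (pdx (solCurve k)) x t = solQ k x t • solCurve k x t) ∧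
    (∀ x t, pdt (solCurve k) x t
      = ((1/4) * pdx (solQ k) x t) • solCurve k x t
        - ((1/2) * solQ k x t) • pdx (solCurve k) x t) := by
  refine ⟨fun x t => ?_, fun x t => ?_, fun x t => ?_⟩
  · simp only [det2, solCurve_eq, pdx_solCurve, Matrix.cons_val_zero, Matrix.cons_val_one,
      Matrix.cons_val_fin_one]
    field_simp
    ring
  · rw [pdx_pdx_solCurve, solQ_eq, solCurve_eq]
    ext i
    fin_cases i
    · simp only [Fin.zero_eta, Matrix.cons_val_zero, Pi.smul_apply, smul_eq_mul]
      ring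
    · simp only [Fin.mk_one, Matrix.cons_val_one, Matrix.cons_val_fin_one, Pi.smul_apply,
        smul_eq_mul]
      field_simp
      ring
  · rw [pdt_solCurve, pdx_solQ, solQ_eq, pdx_solCurve, solCurve_eq]
    ext i
    fin_cases i <;>
    · simp only [Fin.zero_eta, Fin.mk_one, Matrix.cons_val_zero, Matrix.cons_val_one,
        Matrix.cons_val_fin_one, Pi.smul_apply, Pi.sub_apply, smul_eq_mul]
      field_simp
      ring
end
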